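/- Let f : [a,b] → ℝ be such that f^{(n-1)} (n ≥ 1) is absolutely continuous on [a,b] and |f^{(n)}|^q is quasi-convex on [a,b], where p > 1, 1/p + 1/q = 1, and nq > p. Then for all x ∈ [a,b]: |∫_a^b f(t) dt - Σ_{k=0}^{n-1} (1/(k+1)!)[(x-a)^{k+1} f^{(k)}(a) + (-1)^k (b-x)^{k+1} f^{(k)}(b)]| ≤ (1/n!)·((q-1)/(nq-p+q-1))^{1/p}·{((x-a)^{(nq+q-p-1)/(q-1)})^{1/p}·((x-a)^{p+1}/(p+1))^{1/q}·(max{|f^{(n)}(a)|^q, |f^{(n)}(x)|^q})^{1/q} + ((b-x)^{(nq+q-p-1)/(q-1)})^{1/p}·((b-x)^{p+1}/(p+1))^{1/q}·(max{|f^{(n)}(x)|^q, |f^{(n)}(b)|^q})^{1/q}}. -/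

import Mathlib

/-!
Integrating by parts `n` times against the kernels `(x - t)^k / k!` expresses `∫_a^b f` as the
stated sum plus the remainder `(1/n!) ∫_a^b (x - t)^n f⁽ⁿ⁾(t) dt`. Quasi-convexity of `|f⁽ⁿ⁾|^q`
bounds `|f⁽ⁿ⁾|` on `[a, x]` and on `[x, b]` by the `q`-th roots of the maxima at the endpoints,
so the two halves of the remainder are at most `M (x - a)^(n+1) / (n+1)!` and
`M' (b - x)^(n+1) / (n+1)!`. This implies the claimed bound: with
`r = (nq + q - p - 1)/(q - 1)` one has `r/p + (p+1)/q = n + 1`, and then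
`A^(n+1)/(n+1) ≤ (A^r/r)^(1/p) (A^(p+1)/(p+1))^(1/q)` by weighted AM–GM.
-/

open MeasureTheory Set

section Taylor

variable {F : ℕ → ℝ → ℝ} {a b x : ℝ}

theorem integral_sub_pow_mul_eq (m : ℕ)
    (hF : ∀ t ∈ uIcc a b, HasDerivAt (F m) (F (m + 1) t) t)
    (hint : IntervalIntegrable (F (m + 1)) volume a b) :
    ∫ t in a..b, (x - t) ^ m * F m t =
      ((x - a) ^ (m + 1) * F m a - (x - b) ^ (m + 1) * F m b +
        ∫ t in a..b, (x - t) ^ (m + 1) * F (m + 1) t) / (m + 1) := by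
  have hv : ∀ t ∈ uIcc a b,
      HasDerivAt (fun t => -(x - t) ^ (m + 1) / (m + 1)) ((x - t) ^ m) t := by
    intro t _
    have h : HasDerivAt (fun t => -(x - t) ^ (m + 1) / (m + 1))
        (-((m + 1 : ℕ) * (x - t) ^ m * -1) / (m + 1)) t :=
      (((hasDerivAt_id' t).const_sub x).pow (m + 1)).neg.div_const _
    refine h.congr_deriv ?_
    push_cast
    field_simp
  have hparts := intervalIntegral.integral_mul_deriv_eq_deriv_mul hF hv hint
    (((continuous_const.sub continuous_id).pow m).intervalIntegrable a b)
  have hcomm : ∫ t in a..b, (x - t) ^ m * F m t = ∫ t in a..b, F m t * (x - t) ^ m := by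
    simp only [mul_comm]
  have hneg : ∫ t in a..b, F (m + 1) t * (-(x - t) ^ (m + 1) / (m + 1)) =
      -(∫ t in a..b, (x - t) ^ (m + 1) * F (m + 1) t) / (m + 1) := by
    rw [← intervalIntegral.integral_neg, ← intervalIntegral.integral_div]
    congr 1 with t
    ring
  rw [hcomm, hparts, hneg]
  ring

theorem integral_eq_sum_add_integral_sub_pow_mul (n : ℕ)
    (hF : ∀ m < n, ∀ t ∈ uIcc a b, HasDerivAt (F m) (F (m + 1) t) t)
    (hint : ∀ m < n, IntervalIntegrable (F (m + 1)) volume a b) :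
    ∫ t in a..b, F 0 t =
      ∑ k ∈ Finset.range n, (1 / (Nat.factorial (k + 1) : ℝ)) *
        ((x - a) ^ (k + 1) * F k a + (-1 : ℝ) ^ k * (b - x) ^ (k + 1) * F k b) +
      (1 / (Nat.factorial n : ℝ)) * ∫ t in a..b, (x - t) ^ n * F n t := by
  induction n with
  | zero => simp
  | succ n ih =>
    rw [ih (fun m hm => hF m (by omega)) (fun m hm => hint m (by omega)),
      integral_sub_pow_mul_eq n (hF n n.lt_succ_self) (hint n n.lt_succ_self),
      Finset.sum_range_succ, Nat.factorial_succ]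
    have hsign : (x - b) ^ (n + 1) = -((-1 : ℝ) ^ n * (b - x) ^ (n + 1)) := by
      rw [← neg_sub b x, neg_pow, pow_succ (-1 : ℝ)]; ring
    rw [hsign]
    push_cast
    field_simp
    ring

end Taylor

theorem hasDerivAt_iteratedDeriv_of_lt {f : ℝ → ℝ} {s : Set ℝ} {m n : ℕ}
    (hf : ContDiff ℝ ((n - 1 : ℕ) : ℕ∞) f)
    (hf' : ∀ t ∈ s, HasDerivAt (iteratedDeriv (n - 1) f) (iteratedDeriv n f t) t) (hm : m < n) :
    ∀ t ∈ s, HasDerivAt (iteratedDeriv m f) (iteratedDeriv (m + 1) f t) t := by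
  intro t ht
  rcases (Nat.le_sub_one_of_lt hm).eq_or_lt with rfl | hlt
  · rw [Nat.sub_add_cancel (by omega)]
    exact hf' t ht
  · rw [iteratedDeriv_succ]
    exact (hf.differentiable_iteratedDeriv m (by exact_mod_cast hlt) t).hasDerivAt

theorem intervalIntegrable_iteratedDeriv_succ {f : ℝ → ℝ} {a b : ℝ} {m n : ℕ}
    (hf : ContDiff ℝ ((n - 1 : ℕ) : ℕ∞) f)
    (hint : IntervalIntegrable (iteratedDeriv n f) volume a b) (hm : m < n) :
    IntervalIntegrable (iteratedDeriv (m + 1) f) volume a b := by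
  rcases (Nat.succ_le_of_lt hm).eq_or_lt with rfl | hlt
  · exact hint
  · have hcont := hf.continuous_iteratedDeriv (m + 1) (by exact_mod_cast Nat.le_sub_one_of_lt hlt)
    exact hcont.intervalIntegrable a b

theorem QuasiconvexOn.le_max_of_mem_Icc {s : Set ℝ} {g : ℝ → ℝ} (hg : QuasiconvexOn ℝ s g)
    {u v t : ℝ} (hu : u ∈ s) (hv : v ∈ s) (ht : t ∈ Icc u v) : g t ≤ max (g u) (g v) :=
  ((hg (max (g u) (g v))).segment_subset ⟨hu, le_max_left _ _⟩
    ⟨hv, le_max_right _ _⟩ (Icc_subset_segment ht)).2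

theorem abs_le_max_rpow_rpow_of_quasiconvexOn {s : Set ℝ} {g : ℝ → ℝ} {q : ℝ} (hq : 0 < q)
    (hg : QuasiconvexOn ℝ s fun t => |g t| ^ q)
    {u v t : ℝ} (hu : u ∈ s) (hv : v ∈ s) (ht : t ∈ Icc u v) :
    |g t| ≤ max (|g u| ^ q) (|g v| ^ q) ^ (1 / q) := by
  calc |g t| = (|g t| ^ q) ^ (1 / q) := by
        rw [← Real.rpow_mul (abs_nonneg _), mul_one_div_cancel hq.ne', Real.rpow_one]
    _ ≤ max (|g u| ^ q) (|g v| ^ q) ^ (1 / q) := by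
        gcongr
        exact hg.le_max_of_mem_Icc hu hv ht

theorem quasiconvexOn_Icc_of_le_max {g : ℝ → ℝ} {a b : ℝ}
    (hg : ∀ u ∈ Icc a b, ∀ v ∈ Icc a b, ∀ α ∈ Icc (0 : ℝ) 1,
      g (α * u + (1 - α) * v) ≤ max (g u) (g v)) :
    QuasiconvexOn ℝ (Icc a b) g := by
  refine quasiconvexOn_iff_le_max.2 ⟨convex_Icc a b, fun u hu v hv α β hα hβ hαβ => ?_⟩
  obtain rfl : β = 1 - α := by linarith
  exact hg u hu v hv α ⟨hα, by linarith⟩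

theorem abs_integral_sub_pow_mul_le_left {g : ℝ → ℝ} {a x S : ℝ} (n : ℕ) (hax : a ≤ x)
    (hS : ∀ t ∈ Icc a x, |g t| ≤ S) :
    |∫ t in a..x, (x - t) ^ n * g t| ≤ S * ((x - a) ^ (n + 1) / (n + 1)) := by
  have hbound : |∫ t in a..x, (x - t) ^ n * g t| ≤ ∫ t in a..x, (x - t) ^ n * S := by
    refine intervalIntegral.norm_integral_le_of_norm_le (f := fun t => (x - t) ^ n * g t) hax
      (.of_forall ?_)
      ((continuous_const.sub continuous_id |>.pow n |>.mul continuous_const).intervalIntegrable _ _)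
    intro t ht
    have hxt : 0 ≤ x - t := sub_nonneg.2 ht.2
    rw [Real.norm_eq_abs, abs_mul, abs_pow, abs_of_nonneg hxt]
    exact mul_le_mul_of_nonneg_left (hS t (Ioc_subset_Icc_self ht)) (pow_nonneg hxt n)
  rwa [intervalIntegral.integral_mul_const, intervalIntegral.integral_comp_sub_left
    (fun t => t ^ n), integral_pow, sub_self, zero_pow n.succ_ne_zero, sub_zero, mul_comm]
    at hbound

theorem abs_integral_sub_pow_mul_le_right {g : ℝ → ℝ} {x b S : ℝ} (n : ℕ) (hxb : x ≤ b)
    (hS : ∀ t ∈ Icc x b, |g t| ≤ S) :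
    |∫ t in x..b, (x - t) ^ n * g t| ≤ S * ((b - x) ^ (n + 1) / (n + 1)) := by
  have hbound : |∫ t in x..b, (x - t) ^ n * g t| ≤ ∫ t in x..b, (t - x) ^ n * S := by
    refine intervalIntegral.norm_integral_le_of_norm_le (f := fun t => (x - t) ^ n * g t) hxb
      (.of_forall ?_)
      ((continuous_id.sub continuous_const |>.pow n |>.mul continuous_const).intervalIntegrable _ _)
    intro t ht
    have htx : 0 ≤ t - x := sub_nonneg.2 ht.1.le
    rw [Real.norm_eq_abs, abs_mul, abs_pow, abs_sub_comm, abs_of_nonneg htx]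
    exact mul_le_mul_of_nonneg_left (hS t (Ioc_subset_Icc_self ht)) (pow_nonneg htx n)
  rwa [intervalIntegral.integral_mul_const, intervalIntegral.integral_comp_sub_right
    (fun t => t ^ n), integral_pow, sub_self, zero_pow n.succ_ne_zero, sub_zero, mul_comm]
    at hbound

/-- Hölder's inequality for `t ^ ((r - 1)/p) * t ^ ((s - 1)/q)` on `[0, A]`, after integrating. -/
theorem rpow_div_le_rpow_div_rpow_mul_rpow_div_rpow {p q r s A : ℝ} (hpq : p.HolderConjugate q)
    (hr : 0 < r) (hs : 0 < s) (hA : 0 ≤ A) :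
    A ^ (r / p + s / q) / (r / p + s / q) ≤ (A ^ r / r) ^ (1 / p) * (A ^ s / s) ^ (1 / q) := by
  have hmean : r ^ (1 / p) * s ^ (1 / q) ≤ r / p + s / q := by
    have := Real.geom_mean_le_arith_mean2_weighted hpq.one_div_nonneg hpq.symm.one_div_nonneg
      hr.le hs.le (by simpa using hpq.inv_add_inv_eq_one)
    linarith [show 1 / p * r + 1 / q * s = r / p + s / q by ring]
  have hp := hpq.pos
  have hq := hpq.symm.pos
  have hpow : (A ^ r / r) ^ (1 / p) * (A ^ s / s) ^ (1 / q) =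
      A ^ (r / p + s / q) / (r ^ (1 / p) * s ^ (1 / q)) := by
    rw [Real.div_rpow (by positivity) hr.le, Real.div_rpow (by positivity) hs.le,
      ← Real.rpow_mul hA, ← Real.rpow_mul hA, Real.rpow_add' hA (by positivity)]
    ring_nf
  rw [hpow]
  gcongr

theorem pow_succ_div_le_of_holderConjugate {p q A : ℝ} (n : ℕ) (hpq : p.HolderConjugate q)
    (hnq : p < n * q) (hA : 0 ≤ A) :
    A ^ (n + 1) / (n + 1) ≤ ((q - 1) / (n * q - p + q - 1)) ^ (1 / p) *
      ((A ^ ((n * q + q - p - 1) / (q - 1))) ^ (1 / p) * (A ^ (p + 1) / (p + 1)) ^ (1 / q)) := by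
  have hp := hpq.pos
  have hq := hpq.symm.pos
  have hq1 : 0 < q - 1 := hpq.symm.sub_one_pos
  have hpq1 : p * (q - 1) = q := by linarith [hpq.mul_eq_add]
  set r := (n * q + q - p - 1) / (q - 1) with hr_def
  have hr : 0 < r := div_pos (by nlinarith) hq1
  have hconst : (q - 1) / (n * q - p + q - 1) = 1 / r := by
    rw [hr_def, one_div_div]
    ring_nf
  have hexp : r / p + (p + 1) / q = n + 1 := by
    calc r / p + (p + 1) / q = (n * q + q - p - 1) / q + (p + 1) / q := by
          rw [hr_def, div_div, mul_comm (q - 1) p, hpq1]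
      _ = n + 1 := by field_simp; ring
  have h := rpow_div_le_rpow_div_rpow_mul_rpow_div_rpow hpq hr (by linarith : 0 < p + 1) hA
  have hnat : A ^ (n + 1) = A ^ ((n : ℝ) + 1) := by
    exact_mod_cast (Real.rpow_natCast A (n + 1)).symm
  rw [hexp, Real.div_rpow (by positivity) hr.le] at h
  rw [hnat, hconst, Real.div_rpow zero_le_one hr.le, Real.one_rpow]
  convert h using 1
  ring

theorem stmt_5_general (f : ℝ → ℝ) (a b : ℝ) (n : ℕ)
    (p q : ℝ) (hp : 1 < p) (hpq : 1 / p + 1 / q = 1) (hnq : p < (n : ℝ) * q)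
    (hf : ContDiff ℝ ((n - 1 : ℕ) : ℕ∞) f)
    (hf' : ∀ t ∈ Set.Icc a b,
      HasDerivAt (iteratedDeriv (n - 1) f) (iteratedDeriv n f t) t)
    (hint : IntervalIntegrable (iteratedDeriv n f) volume a b)
    (hq : ∀ u ∈ Set.Icc a b, ∀ v ∈ Set.Icc a b, ∀ α ∈ Set.Icc (0 : ℝ) 1,
      |iteratedDeriv n f (α * u + (1 - α) * v)| ^ q ≤
        max (|iteratedDeriv n f u| ^ q) (|iteratedDeriv n f v| ^ q))
    (x : ℝ) (hx : x ∈ Set.Icc a b) :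
    |(∫ t in a..b, f t) -
      ∑ k ∈ Finset.range n, (1 / (Nat.factorial (k + 1) : ℝ)) *
        ((x - a) ^ (k + 1) * iteratedDeriv k f a +
          (-1 : ℝ) ^ k * (b - x) ^ (k + 1) * iteratedDeriv k f b)| ≤
    (1 / (Nat.factorial n : ℝ)) * ((q - 1) / ((n : ℝ) * q - p + q - 1)) ^ (1 / p) *
      (((x - a) ^ (((n : ℝ) * q + q - p - 1) / (q - 1))) ^ (1 / p) *
          ((x - a) ^ (p + 1) / (p + 1)) ^ (1 / q) *
          (max (|iteratedDeriv n f a| ^ q) (|iteratedDeriv n f x| ^ q)) ^ (1 / q) +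
        ((b - x) ^ (((n : ℝ) * q + q - p - 1) / (q - 1))) ^ (1 / p) *
          ((b - x) ^ (p + 1) / (p + 1)) ^ (1 / q) *
          (max (|iteratedDeriv n f x| ^ q) (|iteratedDeriv n f b| ^ q)) ^ (1 / q)) := by
  have hab : a ≤ b := hx.1.trans hx.2
  have hpq' : p.HolderConjugate q :=
    Real.holderConjugate_iff.2 ⟨hp, by simpa only [one_div] using hpq⟩
  have htaylor := integral_eq_sum_add_integral_sub_pow_mul (F := (iteratedDeriv · f)) (x := x) n
    (fun m hm => uIcc_of_le hab ▸ hasDerivAt_iteratedDeriv_of_lt hf hf' hm)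
    (fun m hm => intervalIntegrable_iteratedDeriv_succ hf hint hm)
  simp only [iteratedDeriv_zero] at htaylor
  set g := iteratedDeriv n f
  have hI : IntervalIntegrable (fun t => (x - t) ^ n * g t) volume a b :=
    hint.continuousOn_mul ((continuous_const.sub continuous_id).pow n).continuousOn
  have hx' : x ∈ uIcc a b := uIcc_of_le hab ▸ hx
  rw [htaylor, add_sub_cancel_left, ← intervalIntegral.integral_add_adjacent_intervals
      (hI.mono_set (uIcc_subset_uIcc_left hx')) (hI.mono_set (uIcc_subset_uIcc_right hx')),
    abs_mul, abs_of_nonneg (by positivity)]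
  have hqc : QuasiconvexOn ℝ (Icc a b) fun t => |g t| ^ q := quasiconvexOn_Icc_of_le_max hq
  have hq0 : 0 < q := hpq'.symm.pos
  have h₁ := (abs_integral_sub_pow_mul_le_left n hx.1 fun _ =>
      abs_le_max_rpow_rpow_of_quasiconvexOn hq0 hqc (left_mem_Icc.2 hab) hx).trans
    (mul_le_mul_of_nonneg_left
      (pow_succ_div_le_of_holderConjugate n hpq' hnq (sub_nonneg.2 hx.1)) (by positivity))
  have h₂ := (abs_integral_sub_pow_mul_le_right n hx.2 fun _ =>
      abs_le_max_rpow_rpow_of_quasiconvexOn hq0 hqc hx (right_mem_Icc.2 hab)).trans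
    (mul_le_mul_of_nonneg_left
      (pow_succ_div_le_of_holderConjugate n hpq' hnq (sub_nonneg.2 hx.2)) (by positivity))
  refine (mul_le_mul_of_nonneg_left ((abs_add_le _ _).trans (add_le_add h₁ h₂))
    (by positivity)).trans_eq ?_
  ring

theorem stmt_5 (f : ℝ → ℝ) (a b : ℝ) (hab : a < b) (n : ℕ) (hn : 1 ≤ n)
    (p q : ℝ) (hp : 1 < p) (hpq : 1 / p + 1 / q = 1) (hnq : p < (n : ℝ) * q)
    (hf : ContDiff ℝ ((n - 1 : ℕ) : ℕ∞) f)
    (hf' : ∀ t ∈ Set.Icc a b,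
      HasDerivAt (iteratedDeriv (n - 1) f) (iteratedDeriv n f t) t)
    (hint : IntervalIntegrable (iteratedDeriv n f) volume a b)
    (hq : ∀ u ∈ Set.Icc a b, ∀ v ∈ Set.Icc a b, ∀ α ∈ Set.Icc (0 : ℝ) 1,
      |iteratedDeriv n f (α * u + (1 - α) * v)| ^ q ≤
        max (|iteratedDeriv n f u| ^ q) (|iteratedDeriv n f v| ^ q))
    (x : ℝ) (hx : x ∈ Set.Icc a b) :
    |(∫ t in a..b, f t) -
      ∑ k ∈ Finset.range n, (1 / (Nat.factorial (k + 1) : ℝ)) *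
        ((x - a) ^ (k + 1) * iteratedDeriv k f a +
          (-1 : ℝ) ^ k * (b - x) ^ (k + 1) * iteratedDeriv k f b)| ≤
    (1 / (Nat.factorial n : ℝ)) * ((q - 1) / ((n : ℝ) * q - p + q - 1)) ^ (1 / p) *
      (((x - a) ^ (((n : ℝ) * q + q - p - 1) / (q - 1))) ^ (1 / p) *
          ((x - a) ^ (p + 1) / (p + 1)) ^ (1 / q) *
          (max (|iteratedDeriv n f a| ^ q) (|iteratedDeriv n f x| ^ q)) ^ (1 / q) +
        ((b - x) ^ (((n : ℝ) * q + q - p - 1) / (q - 1))) ^ (1 / p) *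
          ((b - x) ^ (p + 1) / (p + 1)) ^ (1 / q) *
          (max (|iteratedDeriv n f x| ^ q) (|iteratedDeriv n f b| ^ q)) ^ (1 / q)) :=
  stmt_5_general f a b n p q hp hpq hnq hf hf' hint hq x hx
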